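/- Let S : ℕ → ℤ be a path with S(0) = 0 such that limsup_{n→∞} S(n) = +∞, and suppose m ∈ ℕ is not a weak record time of S (equivalently X(m) > 0). Let K = min{k ≥ 0 : 𝒵^m(k) ≥ X(m)}. Then the jumps of the ladder processes across the valley straddling m satisfy: T(T⁻¹(m)) − T(T⁻¹(m) − 1) = T^m(K) + (m − T(T̃⁻¹(m))), and 𝒵(T⁻¹(m)) − 𝒵(T⁻¹(m) − 1) = 𝒵^m(K) − X(m); that is, the overshoot of S above its running maximum when it exits the valley straddling m equals the overshoot of the shifted walk S^m above the level X(m). -/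
import Mathlib

def runMax (S : ℕ → ℤ) : ℕ → ℤ
  | 0 => S 0
  | m + 1 => max (runMax S m) (S (m + 1))

def valleyDepth (S : ℕ → ℤ) (m : ℕ) : ℤ := runMax S m - S m

def IsWeakRecord (S : ℕ → ℤ) (n : ℕ) : Prop := ∀ i < n, S i ≤ S n

noncomputable def ladderT (S : ℕ → ℤ) : ℕ → ℕ
  | 0 => 0
  | k + 1 => sInf {ℓ : ℕ | ladderT S k < ℓ ∧ S (ladderT S k) ≤ S ℓ}

noncomputable def ladderZ (S : ℕ → ℤ) (k : ℕ) : ℤ := S (ladderT S k)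

noncomputable def ladderTinv (S : ℕ → ℤ) (n : ℕ) : ℕ := sInf {k : ℕ | n ≤ ladderT S k}

noncomputable def ladderTtilinv (S : ℕ → ℤ) (n : ℕ) : ℕ := sSup {k : ℕ | ladderT S k ≤ n}

def shiftPath (S : ℕ → ℤ) (m : ℕ) : ℕ → ℤ := fun j => S (m + j) - S m

namespace LadderAux

variable {W : ℕ → ℤ}

lemma le_runMax {i m : ℕ} (h : i ≤ m) : W i ≤ runMax W m := by
  induction m with
  | zero => interval_cases i; simp [runMax]
  | succ n ih =>
    rcases (by omega : i ≤ n ∨ i = n + 1) with h' | h'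
    · exact le_trans (ih h') (le_max_left _ _)
    · subst h'; exact le_max_right _ _

lemma runMax_le {m : ℕ} {c : ℤ} (h : ∀ i ≤ m, W i ≤ c) : runMax W m ≤ c := by
  induction m with
  | zero => simpa [runMax] using h 0 le_rfl
  | succ n ih =>
    exact max_le (ih fun i hi => h i (by omega)) (h (n + 1) le_rfl)

lemma ladderT_succ_def (k : ℕ) :
    ladderT W (k + 1) = sInf {ℓ : ℕ | ladderT W k < ℓ ∧ W (ladderT W k) ≤ W ℓ} := by
  simp [ladderT]

variable (hW : ∀ M : ℤ, ∀ N : ℕ, ∃ n, N ≤ n ∧ M ≤ W n)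
include hW

lemma ladder_set_nonempty (k : ℕ) :
    {ℓ : ℕ | ladderT W k < ℓ ∧ W (ladderT W k) ≤ W ℓ}.Nonempty := by
  obtain ⟨n, hn1, hn2⟩ := hW (W (ladderT W k)) (ladderT W k + 1)
  exact ⟨n, by omega, hn2⟩

lemma ladderT_succ_spec (k : ℕ) :
    ladderT W k < ladderT W (k + 1) ∧ W (ladderT W k) ≤ W (ladderT W (k + 1)) := by
  have := Nat.sInf_mem (ladder_set_nonempty hW k)
  rwa [← ladderT_succ_def] at this

lemma ladderT_strictMono : StrictMono (ladderT W) :=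
  strictMono_nat_of_lt_succ fun k => (ladderT_succ_spec hW k).1

lemma self_le_ladderT (k : ℕ) : k ≤ ladderT W k := by
  induction k with
  | zero => simp [ladderT]
  | succ n ih => have := (ladderT_succ_spec hW n).1; omega

lemma ladderT_record (k : ℕ) : ∀ i < ladderT W k, W i ≤ W (ladderT W k) := by
  induction k with
  | zero => simp [ladderT]
  | succ n ih =>
    intro i hi
    have hspec := ladderT_succ_spec hW n
    by_cases hik : i ≤ ladderT W n
    · rcases eq_or_lt_of_le hik with h | h
      · subst h; exact hspec.2
      · exact le_trans (ih i h) hspec.2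
    · have h1 : ladderT W n < i := by omega
      have hi' : i < sInf {ℓ : ℕ | ladderT W n < ℓ ∧ W (ladderT W n) ≤ W ℓ} := by
        rwa [← ladderT_succ_def]
      have := Nat.notMem_of_lt_sInf hi'
      simp only [Set.mem_setOf_eq, not_and, not_le] at this
      have := this h1
      linarith [hspec.2]

lemma record_mem_ladder {n : ℕ} (hn : IsWeakRecord W n) : ∃ k, ladderT W k = n := by
  have hne : {k : ℕ | ladderT W k ≤ n}.Nonempty := ⟨0, by simp [ladderT]⟩
  have hbdd : BddAbove {k : ℕ | ladderT W k ≤ n} :=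
    ⟨n, fun k hk => le_trans (self_le_ladderT hW k) hk⟩
  set c := sSup {k : ℕ | ladderT W k ≤ n} with hc
  have hcmem : ladderT W c ≤ n := Nat.sSup_mem hne hbdd
  rcases eq_or_lt_of_le hcmem with h | h
  · exact ⟨c, h⟩
  · exfalso
    have hnmem : n ∈ {ℓ : ℕ | ladderT W c < ℓ ∧ W (ladderT W c) ≤ W ℓ} :=
      ⟨h, hn _ h⟩
    have h1 : ladderT W (c + 1) ≤ n := by
      rw [ladderT_succ_def]; exact Nat.sInf_le hnmem
    have : c + 1 ≤ c := le_csSup hbdd h1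
    omega

end LadderAux

open LadderAux in
/-- **Jumps of the ladder processes across a valley** (Statement 8).
Assume `S 0 = 0`, `limsup S = +∞`, and `m` is not a weak record time of `S`.
Let `K = min {k : 𝒵^m k ≥ X m}`.  Then
`T (T⁻¹ m) − T (T⁻¹ m − 1) = T^m K + (m − T (T̃⁻¹ m))` and
`𝒵 (T⁻¹ m) − 𝒵 (T⁻¹ m − 1) = 𝒵^m K − X m`. -/
theorem ladder_jumps_across_valley
    (S : ℕ → ℤ) (hS0 : S 0 = 0)
    (hS : ∀ M : ℤ, ∀ N : ℕ, ∃ n, N ≤ n ∧ M ≤ S n)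
    (m : ℕ) (hm : ¬ IsWeakRecord S m) :
    ladderT S (ladderTinv S m) - ladderT S (ladderTinv S m - 1)
      = ladderT (shiftPath S m)
          (sInf {k : ℕ | valleyDepth S m ≤ ladderZ (shiftPath S m) k})
        + (m - ladderT S (ladderTtilinv S m)) ∧
    ladderZ S (ladderTinv S m) - ladderZ S (ladderTinv S m - 1)
      = ladderZ (shiftPath S m)
          (sInf {k : ℕ | valleyDepth S m ≤ ladderZ (shiftPath S m) k})
        - valleyDepth S m := by
  set T := ladderT S with hT
  set a := ladderTtilinv S m with ha
  set b := ladderTinv S m with hb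
  -- basic facts about a
  have hane : {k : ℕ | T k ≤ m}.Nonempty := ⟨0, by simp [hT, ladderT]⟩
  have habdd : BddAbove {k : ℕ | T k ≤ m} :=
    ⟨m, fun k hk => le_trans (self_le_ladderT hS k) hk⟩
  have haTam : T a ≤ m := Nat.sSup_mem hane habdd
  have hsucc : m < T (a + 1) := by
    by_contra h
    push_neg at h
    have : a + 1 ≤ a := le_csSup habdd h
    omega
  -- facts about b
  have hbne : {k : ℕ | m ≤ T k}.Nonempty := ⟨m, self_le_ladderT hS m⟩
  have hbmem : m ≤ T b := Nat.sInf_mem hbne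
  have hble : b ≤ a + 1 := Nat.sInf_le (le_of_lt hsucc)
  have hTbne : T b ≠ m := by
    intro h
    exact hm (fun i hi => by rw [← h] at hi ⊢; exact ladderT_record hS b i hi)
  have hTbm : m < T b := lt_of_le_of_ne hbmem (Ne.symm hTbne)
  have hab : b = a + 1 := by
    rcases (by omega : b = a + 1 ∨ b ≤ a) with h | h
    · exact h
    · exfalso
      have : T b ≤ T a := (ladderT_strictMono hS).monotone h
      omega
  -- running maximum equals S (T a)
  have hmid : ∀ i, T a < i → i ≤ m → S i < S (T a) := by
    intro i h1 h2
    have hi' : i < sInf {ℓ : ℕ | T a < ℓ ∧ S (T a) ≤ S ℓ} := by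
      rw [← ladderT_succ_def, ← hT]; omega
    have := Nat.notMem_of_lt_sInf hi'
    simp only [Set.mem_setOf_eq, not_and, not_le] at this
    exact this h1
  have hR : runMax S m = S (T a) := by
    apply le_antisymm
    · apply runMax_le
      intro i hi
      by_cases hik : i ≤ T a
      · rcases eq_or_lt_of_le hik with h | h
        · rw [h]
        · exact ladderT_record hS a i h
      · exact le_of_lt (hmid i (by omega) hi)
    · exact le_runMax haTam
  -- positivity of the valley depth
  have hX : 0 < valleyDepth S m := by
    simp only [IsWeakRecord, not_forall] at hm
    obtain ⟨i, hi, hSi⟩ := hm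
    push_neg at hSi
    have := le_runMax (W := S) (le_of_lt hi)
    simp only [valleyDepth]; omega
  -- shifted path
  set S' := shiftPath S m with hS'def
  have hS' : ∀ M : ℤ, ∀ N : ℕ, ∃ n, N ≤ n ∧ M ≤ S' n := by
    intro M N
    obtain ⟨n, hn1, hn2⟩ := hS (M + S m) (m + N)
    exact ⟨n - m, by omega, by simp only [hS'def, shiftPath]; rw [(by omega : m + (n - m) = n)]; omega⟩
  set X := valleyDepth S m with hXdef
  set A := {j : ℕ | X ≤ S' j} with hA
  have hAne : A.Nonempty := by
    obtain ⟨n, _, hn2⟩ := hS' X 0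
    exact ⟨n, hn2⟩
  set j0 := sInf A with hj0
  have hj0mem : X ≤ S' j0 := Nat.sInf_mem hAne
  have hj0pos : 0 < j0 := by
    rcases Nat.eq_zero_or_pos j0 with h | h
    · exfalso
      have : X ≤ S' 0 := h ▸ hj0mem
      simp only [hS'def, shiftPath, Nat.add_zero, sub_self] at this
      omega
    · exact h
  have hj0rec : IsWeakRecord S' j0 := by
    intro i hi
    have := Nat.notMem_of_lt_sInf (hj0 ▸ hi)
    simp only [hA, Set.mem_setOf_eq, not_le] at this
    linarith
  obtain ⟨k, hk⟩ := record_mem_ladder hS' hj0rec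
  set K := sInf {k : ℕ | X ≤ ladderZ S' k} with hK
  have hkmem : k ∈ {k : ℕ | X ≤ ladderZ S' k} := by
    simp only [Set.mem_setOf_eq, ladderZ, hk]; exact hj0mem
  have hKmem : X ≤ ladderZ S' K := Nat.sInf_mem ⟨k, hkmem⟩
  have hKk : K ≤ k := Nat.sInf_le hkmem
  have hTK : ladderT S' K = j0 := by
    apply le_antisymm
    · rw [← hk]; exact (ladderT_strictMono hS').monotone hKk
    · exact Nat.sInf_le (by simpa only [hA, Set.mem_setOf_eq, ladderZ] using hKmem)
  -- identification T (a+1) = m + j0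
  have hmain : T (a + 1) = m + j0 := by
    apply le_antisymm
    · have hmemB : m + j0 ∈ {ℓ : ℕ | T a < ℓ ∧ S (T a) ≤ S ℓ} := by
        constructor
        · omega
        · have : X ≤ S' j0 := hj0mem
          simp only [hS'def, shiftPath] at this
          simp only [hXdef, valleyDepth, hR] at this
          omega
      rw [hT, ladderT_succ_def]
      exact Nat.sInf_le hmemB
    · have hspec := ladderT_succ_spec hS (W := S) a
      simp only [← hT] at hspec
      have hj : T (a + 1) - m ∈ A := by
        simp only [hA, Set.mem_setOf_eq, hS'def, shiftPath]
        rw [(by omega : m + (T (a + 1) - m) = T (a + 1))]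
        simp only [hXdef, valleyDepth, hR]
        have := hspec.2
        omega
      have := Nat.sInf_le hj
      omega
  have hTb : T b = m + ladderT S' K := by rw [hab, hmain, hTK]
  have hba : b - 1 = a := by omega
  constructor
  · rw [hba, hTb]
    omega
  · rw [hba]
    show S (T b) - S (T a) = S' (ladderT S' K) - X
    rw [hTb, hTK]
    have h1 : S' j0 = S (m + j0) - S m := rfl
    have h2 : X = S (T a) - S m := by simp only [hXdef, valleyDepth, hR]
    rw [h1, h2]; ring
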